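/- The Dirac operator D = d + dᵀ of the complete simplicial complex on n vertices equals Σ_{i∈[n]} Z^{⊗(i-1)} ⊗ X ⊗ I^{⊗(n-i)}, where the 2^n-dimensional space is identified with (ℝ²)^{⊗n} via subsets of [n] ↔ bit strings. -/
import Mathlib


open Matrix

/-- The boundary operator of the complete simplicial complex on `n` vertices, as a
matrix on the `2^n`-dimensional space with basis indexed by subsets of `Fin n`:
`d|x⟩ = ∑_{j=1}^{|x|} (-1)^{j-1} |x ∖ {k_j}⟩` where `k_1 < ⋯ < k_{|x|}` enumerate `x`
(so removing `k` carries the sign `(-1)^{#{m ∈ x : m < k}}`). -/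
def boundary {n : ℕ} : Matrix (Finset (Fin n)) (Finset (Fin n)) ℝ :=
  fun y x =>
    ∑ k ∈ x, if y = x.erase k then (-1 : ℝ) ^ ((x.filter (fun m => m < k)).card) else 0

/-- The anticommuting generator `P i = Z^{⊗(i-1)} ⊗ X ⊗ I^{⊗(n-i)}` acting on the
`2^n`-dimensional space with computational basis indexed by bit strings
`S : Fin n → Bool`:  `P i |S⟩ = (-1)^{#{j < i : S j = 1}} |S ⊕ e_i⟩`. -/
def pauliGen {n : ℕ} (i : Fin n) : Matrix (Fin n → Bool) (Fin n → Bool) ℝ :=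
  fun T S =>
    if T = Function.update S i (!(S i)) then
      (-1 : ℝ) ^ ((Finset.univ.filter (fun j => j < i ∧ S j = true)).card)
    else 0

/-- The identification of subsets `x ⊆ [n]` with bit strings `s : Fin n → Bool`,
`s i = 1 ↔ i ∈ x`. -/
def setToBits {n : ℕ} : Finset (Fin n) ≃ (Fin n → Bool) where
  toFun S := fun i => decide (i ∈ S)
  invFun f := Finset.univ.filter (fun i => f i = true)
  left_inv S := by ext i; simp
  right_inv f := by funext i; simp

lemma flip_iff {n : ℕ} (x y : Finset (Fin n)) (i : Fin n) :
    setToBits y = Function.update (setToBits x) i (!(setToBits x i)) ↔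
      y = if i ∈ x then x.erase i else insert i x := by
  constructor
  · intro h
    ext j
    have hj := congrFun h j
    by_cases hji : j = i
    · subst hji
      simp only [Function.update_self, setToBits, Equiv.coe_fn_mk] at hj
      by_cases hx : j ∈ x <;> simp_all [Finset.mem_erase, Finset.mem_insert]
    · simp only [Function.update_of_ne hji, setToBits, Equiv.coe_fn_mk,
        decide_eq_decide] at hj
      by_cases hx : i ∈ x <;>
        simp [hx, hj, Finset.mem_erase, Finset.mem_insert, hji]
  · intro h
    subst h
    funext j
    by_cases hji : j = i
    · subst hji
      by_cases hx : j ∈ x <;>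
        simp [setToBits, Function.update_self, hx, Finset.mem_erase, Finset.mem_insert]
    · by_cases hx : i ∈ x <;>
        simp [setToBits, Function.update_of_ne hji, hx, Finset.mem_erase,
          Finset.mem_insert, hji]

lemma sign_card {n : ℕ} (x : Finset (Fin n)) (i : Fin n) :
    (Finset.univ.filter (fun j => j < i ∧ setToBits x j = true)).card =
      (x.filter (fun m => m < i)).card := by
  congr 1
  ext j
  simp [setToBits, and_comm]

/-- Under the identification of subsets of `[n]` with bit strings, the Dirac operator
`D = d + dᵀ` of the complete simplicial complex on `n` vertices equals
`∑_{i ∈ [n]} Z^{⊗(i-1)} ⊗ X ⊗ I^{⊗(n-i)}`. -/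
theorem dirac_eq_sum_pauliGen {n : ℕ} :
    Matrix.reindex setToBits setToBits (boundary (n := n) + (boundary (n := n))ᵀ) =
      ∑ i : Fin n, pauliGen i := by
  ext T S
  obtain ⟨y, rfl⟩ := setToBits.surjective T
  obtain ⟨x, rfl⟩ := setToBits.surjective S
  simp only [Matrix.reindex_apply, Matrix.submatrix_apply, Equiv.symm_apply_apply,
    Matrix.add_apply, Matrix.transpose_apply, Matrix.sum_apply, boundary, pauliGen]
  have hA : ∀ i : Fin n,
      (if setToBits y = Function.update (setToBits x) i (!(setToBits x i)) then
        ((-1 : ℝ) ^ (Finset.univ.filter (fun j => j < i ∧ setToBits x j = true)).card)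
       else 0)
      = if y = (if i ∈ x then x.erase i else insert i x) then
          (-1 : ℝ) ^ ((x.filter (fun m => m < i)).card) else 0 := by
    intro i
    exact if_congr (flip_iff x y i) (by rw [sign_card]) rfl
  rw [Finset.sum_congr rfl (fun i _ => hA i),
    ← Finset.sum_filter_add_sum_filter_not Finset.univ (· ∈ x)]
  congr 1
  · rw [Finset.filter_univ_mem]
    refine Finset.sum_congr rfl (fun k hk => ?_)
    rw [if_pos hk]
  · -- second summand: transpose part
    rw [show (∑ k ∈ y, if x = y.erase k then
        (-1 : ℝ) ^ ((y.filter (fun m => m < k)).card) else 0)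
      = ∑ k ∈ Finset.univ.filter (· ∈ y), if x = y.erase k then
        (-1 : ℝ) ^ ((y.filter (fun m => m < k)).card) else 0 by
        rw [Finset.filter_univ_mem]]
    rw [Finset.sum_filter, Finset.sum_filter]
    refine Finset.sum_congr rfl (fun k _ => ?_)
    by_cases hky : k ∈ y <;> by_cases hkx : k ∈ x <;>
      simp only [hky, hkx, not_true_eq_false, not_false_eq_true, if_true, if_false,
        ite_true, ite_false]
    · rw [if_neg]
      intro hx
      exact (hx ▸ Finset.notMem_erase k y) hkx
    · by_cases hx : x = y.erase k
      · have hy : y = insert k x := by rw [hx, Finset.insert_erase hky]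
        rw [if_pos hx, if_pos hy, hy, Finset.filter_insert, if_neg (lt_irrefl k)]
      · rw [if_neg hx, if_neg]
        intro hy
        exact hx (by rw [hy, Finset.erase_insert hkx])
    · rw [if_neg]
      intro hy
      exact hky (hy ▸ Finset.mem_insert_self k x)
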